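/- arXiv:1810.01762 — 2 statements merged into one kernel-verified Lean document; each statement's English description precedes it below -/
import Mathlib

section
/- Let 𝓑 be an infinite-dimensional complex Banach space. For every integer k ≥ 1 there exists a constant C > 0 (depending only on k) such that for every bounded linear operator T ∈ B(𝓑), (1/C)·F_k(T) ≤ c_k(T) ≤ C·F_k(T), where c_k and F_k denote the k-th Gelfand and Kolmogorov numbers respectively. -/
open Filter Topology MeasureTheory

noncomputable section

variable {B : Type*} [NormedAddCommGroup B] [NormedSpace ℂ B] [CompleteSpace B]

/-- The `k`-th Gelfand number of a bounded operator `T`: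
`c_k(T) = inf{‖T|_V‖ : V a closed subspace with dim(B/V) = k-1}`. -/
noncomputable def gelfand (T : B →L[ℂ] B) (k : ℕ) : ℝ :=
  sInf { r : ℝ | ∃ V : Submodule ℂ B, IsClosed (V : Set B) ∧
    Module.rank ℂ (B ⧸ V) = ((k - 1 : ℕ) : Cardinal) ∧
    r = sSup ((fun v => ‖T v‖) '' {v : B | v ∈ V ∧ ‖v‖ = 1}) }

/-- The `k`-th Kolmogorov number of a bounded operator `T`:
`F_k(T) = sup{ inf{‖Tv‖ : v ∈ V, ‖v‖ = 1} : V a subspace with dim V = k }`. -/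
noncomputable def kolmogorov (T : B →L[ℂ] B) (k : ℕ) : ℝ :=
  sSup { r : ℝ | ∃ V : Submodule ℂ B, Module.rank ℂ V = (k : Cardinal) ∧
    r = sInf ((fun v => ‖T v‖) '' {v : B | v ∈ V ∧ ‖v‖ = 1}) }

/-- The singular value function `φ_c^s(T) = c_1(T)⋯c_{⌊s⌋}(T)·c_{⌊s⌋+1}(T)^{s-⌊s⌋}`. -/
noncomputable def phiC (T : B →L[ℂ] B) (s : ℝ) : ℝ :=
  (∏ j ∈ Finset.Icc 1 ⌊s⌋₊, gelfand T j) * gelfand T (⌊s⌋₊ + 1) ^ (s - (⌊s⌋₊ : ℝ))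

/-- The singular value function defined via Kolmogorov numbers:
`φ_F^s(T) = F_1(T)⋯F_{⌊s⌋}(T)·F_{⌊s⌋+1}(T)^{s-⌊s⌋}`. -/
noncomputable def phiF (T : B →L[ℂ] B) (s : ℝ) : ℝ :=
  (∏ j ∈ Finset.Icc 1 ⌊s⌋₊, kolmogorov T j) * kolmogorov T (⌊s⌋₊ + 1) ^ (s - (⌊s⌋₊ : ℝ))

/-- The `s`-spectral radius `ρ_s(T) = lim_n φ_c^s(T^n)^{1/n}` (the limit exists, so we may
express it as a `limsup`). -/
noncomputable def rhoS (T : B →L[ℂ] B) (s : ℝ) : ℝ :=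
  Filter.limsup (fun n : ℕ => phiC (T ^ n) s ^ (1 / n : ℝ)) Filter.atTop

/-- The cocycle generated by `A` over `f`: `A^0(x) = Id`, `A^{n+1}(x) = A(fⁿ x) ∘ Aⁿ(x)`. -/
noncomputable def cocycle {M : Type*} (f : M → M) (A : M → (B →L[ℂ] B)) :
    ℕ → M → (B →L[ℂ] B)
  | 0, _ => 1
  | n + 1, x => A (f^[n] x) * cocycle f A n x

/-- The `s`-joint spectral radius `ρ̂_s(A) = lim_n sup_{x∈M} φ_c^s(Aⁿ(x))^{1/n}` (the limit
exists, so we may express it as a `limsup`). -/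
noncomputable def jointRad {M : Type*} (f : M → M) (A : M → (B →L[ℂ] B)) (s : ℝ) : ℝ :=
  Filter.limsup
    (fun n : ℕ => sSup (Set.range fun x : M => phiC (cocycle f A n x) s ^ (1 / n : ℝ)))
    Filter.atTop

/-- The `s`-generalized spectral radius `ρ̄_s(A) = limsup_n (sup_{x∈M} ρ_s(Aⁿ(x)))^{1/n}`. -/
noncomputable def genRad {M : Type*} (f : M → M) (A : M → (B →L[ℂ] B)) (s : ℝ) : ℝ :=
  Filter.limsup
    (fun n : ℕ => (sSup (Set.range fun x : M => rhoS (cocycle f A n x) s)) ^ (1 / n : ℝ))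
    Filter.atTop

/-- The Anosov Closing property for a map `f` on a metric space. -/
def AnosovClosing {M : Type*} [MetricSpace M] (f : M → M) : Prop :=
  ∃ C₁ ε₀ θ : ℝ, 0 < C₁ ∧ 0 < ε₀ ∧ 0 < θ ∧
    ∀ (z : M) (n : ℕ), dist (f^[n] z) z < ε₀ →
      ∃ p : M, f^[n] p = p ∧ ∀ j ≤ n,
        dist (f^[j] z) (f^[j] p) ≤
          C₁ * Real.exp (-θ * min (j : ℝ) ((n : ℝ) - (j : ℝ))) * dist (f^[n] z) z

/-- `A` is an `α`-Hölder continuous map. -/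
def HolderMap {M : Type*} [MetricSpace M] (α : ℝ) (A : M → (B →L[ℂ] B)) : Prop :=
  ∃ C₂ : ℝ, 0 < C₂ ∧ ∀ x y : M, ‖A x - A y‖ ≤ C₂ * dist x y ^ α

/-- The Hölder norm `‖A‖_α = sup_x ‖A x‖ + sup_{x ≠ y} ‖A x - A y‖ / d(x,y)^α`. -/
noncomputable def holderNorm {M : Type*} [MetricSpace M] (α : ℝ) (A : M → (B →L[ℂ] B)) : ℝ :=
  sSup (Set.range fun x : M => ‖A x‖) +
    sSup { r : ℝ | ∃ x y : M, x ≠ y ∧ r = ‖A x - A y‖ / dist x y ^ α }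

/-- Extended-real logarithm of a nonnegative real number, with `elog 0 = ⊥ = -∞`. -/
noncomputable def elog (x : ℝ) : EReal := if x ≤ 0 then ⊥ else ((Real.log x : ℝ) : EReal)

section GKauxSection
set_option linter.unusedSectionVars false
universe u
variable {E : Type u} [NormedAddCommGroup E] [NormedSpace ℂ E] [CompleteSpace E]

namespace GKaux

def Gset (T : E →L[ℂ] E) (k : ℕ) : Set ℝ :=
  { r : ℝ | ∃ V : Submodule ℂ E, IsClosed (V : Set E) ∧
    Module.rank ℂ (E ⧸ V) = ((k - 1 : ℕ) : Cardinal) ∧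
    r = sSup ((fun v => ‖T v‖) '' {v : E | v ∈ V ∧ ‖v‖ = 1}) }

def Kset (T : E →L[ℂ] E) (k : ℕ) : Set ℝ :=
  { r : ℝ | ∃ V : Submodule ℂ E, Module.rank ℂ V = (k : Cardinal) ∧
    r = sInf ((fun v => ‖T v‖) '' {v : E | v ∈ V ∧ ‖v‖ = 1}) }

lemma gelfand_def (T : E →L[ℂ] E) (k : ℕ) : gelfand T k = sInf (Gset T k) := rfl

lemma kolmogorov_def (T : E →L[ℂ] E) (k : ℕ) : kolmogorov T k = sSup (Kset T k) := rfl

lemma exists_unit {V : Submodule ℂ E} (h : V ≠ ⊥) : ∃ v, v ∈ V ∧ ‖v‖ = 1 := by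
  obtain ⟨x, hxV, hx⟩ := (Submodule.ne_bot_iff V).mp h
  refine ⟨((‖x‖⁻¹ : ℝ) : ℂ) • x, V.smul_mem _ hxV, ?_⟩
  rw [norm_smul, Complex.norm_real, Real.norm_eq_abs, abs_of_nonneg (by positivity),
    inv_mul_cancel₀ (norm_ne_zero_iff.mpr hx)]

lemma bddAbove_image (T : E →L[ℂ] E) (V : Submodule ℂ E) :
    BddAbove ((fun v => ‖T v‖) '' {v : E | v ∈ V ∧ ‖v‖ = 1}) := by
  refine ⟨‖T‖, ?_⟩
  rintro r ⟨v, ⟨hv, hv1⟩, rfl⟩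
  calc ‖T v‖ ≤ ‖T‖ * ‖v‖ := T.le_opNorm v
  _ = ‖T‖ := by rw [hv1, mul_one]

lemma not_bot_of_quot_finite (hinf : ¬ FiniteDimensional ℂ E) {V : Submodule ℂ E}
    (h : Module.rank ℂ (E ⧸ V) < Cardinal.aleph0) : V ≠ ⊥ := by
  intro hbot
  have e := Submodule.quotEquivOfEqBot V hbot
  rw [e.rank_eq] at h
  exact hinf (Module.rank_lt_aleph0_iff.mp h)

lemma quot_rank_succ (hinf : ¬ FiniteDimensional ℂ E) (W : Submodule ℂ E)
    (hWc : IsClosed (W : Set E)) (d : ℕ) (hr : Module.rank ℂ (E ⧸ W) = (d : Cardinal)) :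
    ∃ V : Submodule ℂ E, V ≤ W ∧ IsClosed (V : Set E) ∧
      Module.rank ℂ (E ⧸ V) = ((d + 1 : ℕ) : Cardinal) := by
  have hWb : W ≠ ⊥ :=
    not_bot_of_quot_finite hinf (by rw [hr]; exact Cardinal.nat_lt_aleph0 d)
  obtain ⟨w, hwW, hw⟩ := (Submodule.ne_bot_iff W).mp hWb
  obtain ⟨φ, hφ1, hφw⟩ := exists_dual_vector ℂ w (norm_ne_zero_iff.mpr hw)
  have hφw0 : φ w ≠ 0 := by
    rw [hφw]
    exact Complex.ofReal_ne_zero.mpr (norm_ne_zero_iff.mpr hw)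
  set f : E →ₗ[ℂ] (E ⧸ W) × ℂ := (W.mkQ).prod (φ : E →ₗ[ℂ] ℂ) with hf
  have hker : LinearMap.ker f = W ⊓ LinearMap.ker (φ : E →ₗ[ℂ] ℂ) := by
    rw [hf, LinearMap.ker_prod, Submodule.ker_mkQ]
  have hsurj : Function.Surjective f := by
    rintro ⟨q, c⟩
    obtain ⟨y, rfl⟩ := W.mkQ_surjective q
    refine ⟨y + ((c - φ y) / φ w) • w, ?_⟩
    have h1 : W.mkQ w = 0 := by
      rw [Submodule.mkQ_apply, Submodule.Quotient.mk_eq_zero]; exact hwW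
    have h2 : φ (y + ((c - φ y) / φ w) • w) = c := by
      rw [map_add, _root_.map_smul, smul_eq_mul, div_mul_cancel₀ _ hφw0]; ring
    have h3 : W.mkQ (y + ((c - φ y) / φ w) • w) = W.mkQ y := by
      rw [map_add, _root_.map_smul, h1, smul_zero, add_zero]
    exact Prod.ext h3 h2
  have e := LinearMap.quotKerEquivOfSurjective f hsurj
  refine ⟨W ⊓ LinearMap.ker (φ : E →ₗ[ℂ] ℂ), inf_le_left, ?_, ?_⟩
  · have : ((W ⊓ LinearMap.ker (φ : E →ₗ[ℂ] ℂ) : Submodule ℂ E) : Set E)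
        = (W : Set E) ∩ (LinearMap.ker (φ : E →ₗ[ℂ] ℂ) : Set E) := rfl
    rw [this]
    exact hWc.inter (ContinuousLinearMap.isClosed_ker φ)
  · calc Module.rank ℂ (E ⧸ (W ⊓ LinearMap.ker (φ : E →ₗ[ℂ] ℂ)))
        = Module.rank ℂ (E ⧸ LinearMap.ker f) := by rw [hker]
    _ = Module.rank ℂ ((E ⧸ W) × ℂ) := e.rank_eq
    _ = ((d + 1 : ℕ) : Cardinal) := by
        rw [rank_prod, hr, Module.rank_self]
        simp only [Cardinal.lift_natCast, Cardinal.lift_one]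
        norm_cast

lemma quot_rank_add (hinf : ¬ FiniteDimensional ℂ E) (m : ℕ) :
    ∀ (W : Submodule ℂ E), IsClosed (W : Set E) → ∀ d : ℕ,
    Module.rank ℂ (E ⧸ W) = (d : Cardinal) →
    ∃ V : Submodule ℂ E, V ≤ W ∧ IsClosed (V : Set E) ∧
      Module.rank ℂ (E ⧸ V) = ((d + m : ℕ) : Cardinal) := by
  induction m with
  | zero => exact fun W hWc d hr => ⟨W, le_rfl, hWc, by simpa using hr⟩
  | succ m IH =>
      intro W hWc d hr
      obtain ⟨V₁, hV₁W, hV₁c, hV₁r⟩ := IH W hWc d hr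
      obtain ⟨V, hV, hVc, hVr⟩ := quot_rank_succ hinf V₁ hV₁c (d + m) hV₁r
      refine ⟨V, hV.trans hV₁W, hVc, ?_⟩
      rw [hVr]
      norm_cast

lemma exists_gelfand_subspace (hinf : ¬ FiniteDimensional ℂ E) (n : ℕ) {j : ℕ} (hj : j ≤ n)
    (f : Fin j → (E →L[ℂ] ℂ)) :
    ∃ V : Submodule ℂ E, IsClosed (V : Set E) ∧
      Module.rank ℂ (E ⧸ V) = (n : Cardinal) ∧ ∀ i, V ≤ LinearMap.ker (f i : E →ₗ[ℂ] ℂ) := by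
  set K : Submodule ℂ E := ⨅ i, LinearMap.ker (f i : E →ₗ[ℂ] ℂ) with hK
  have hKc : IsClosed (K : Set E) := by
    rw [hK, Submodule.coe_iInf]
    exact isClosed_iInter fun i => ContinuousLinearMap.isClosed_ker (f i)
  set F : E →ₗ[ℂ] (Fin j → ℂ) := LinearMap.pi (fun i => ((f i : E →ₗ[ℂ] ℂ))) with hF
  have hkK : LinearMap.ker F = K := by
    rw [hF, LinearMap.ker_pi]
  have h1 := (LinearMap.quotKerEquivRange F).lift_rank_eq
  have h2 : Module.rank ℂ (LinearMap.range F) ≤ (j : Cardinal) :=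
    (Submodule.rank_le _).trans (by rw [rank_fun']; simp)
  have hle : Module.rank ℂ (E ⧸ K) ≤ (j : Cardinal) := by
    rw [← hkK, ← Cardinal.lift_uzero (Module.rank ℂ (E ⧸ LinearMap.ker F)), h1]
    have h3 : Cardinal.lift.{u} (Module.rank ℂ (LinearMap.range F))
        ≤ Cardinal.lift.{u} ((j : Cardinal)) := Cardinal.lift_le.mpr h2
    simpa using h3
  obtain ⟨d, hd⟩ := Cardinal.lt_aleph0.mp (hle.trans_lt (Cardinal.nat_lt_aleph0 j))
  have hdj : d ≤ j := by
    rw [hd] at hle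
    exact_mod_cast hle
  obtain ⟨V, hVK, hVc, hVr⟩ := quot_rank_add hinf (n - d) K hKc d hd
  refine ⟨V, hVc, ?_, fun i => hVK.trans (hK ▸ iInf_le _ i)⟩
  rw [hVr]
  have : d + (n - d) = n := by omega
  rw [this]

lemma Gset_nonneg (hinf : ¬ FiniteDimensional ℂ E) (T : E →L[ℂ] E) (k : ℕ) :
    ∀ r ∈ Gset T k, 0 ≤ r := by
  rintro r ⟨V, hVc, hVr, rfl⟩
  have hVb : V ≠ ⊥ :=
    not_bot_of_quot_finite hinf (by rw [hVr]; exact Cardinal.nat_lt_aleph0 _)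
  obtain ⟨v, hvV, hv1⟩ := exists_unit hVb
  exact (norm_nonneg (T v)).trans
    (le_csSup (bddAbove_image T V) ⟨v, ⟨hvV, hv1⟩, rfl⟩)

lemma Gset_bddBelow (hinf : ¬ FiniteDimensional ℂ E) (T : E →L[ℂ] E) (k : ℕ) :
    BddBelow (Gset T k) :=
  ⟨0, fun _ hr => Gset_nonneg hinf T k _ hr⟩

lemma Gset_nonempty (hinf : ¬ FiniteDimensional ℂ E) (k : ℕ) (T : E →L[ℂ] E) :
    (Gset T k).Nonempty := by
  obtain ⟨V, hVc, hVr, -⟩ :=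
    exists_gelfand_subspace hinf (k - 1) (Nat.zero_le (k-1)) (Fin.elim0 : Fin 0 → (E →L[ℂ] ℂ))
  exact ⟨_, V, hVc, hVr, rfl⟩

lemma Kset_nonneg (T : E →L[ℂ] E) (k : ℕ) : ∀ r ∈ Kset T k, 0 ≤ r := by
  rintro r ⟨V, hVr, rfl⟩
  apply Real.sInf_nonneg
  rintro y ⟨v, -, rfl⟩
  exact norm_nonneg _

lemma Kset_nonempty (hinf : ¬ FiniteDimensional ℂ E) (k : ℕ) (T : E →L[ℂ] E) :
    (Kset T k).Nonempty := by
  have hklerank : (k : Cardinal) ≤ Module.rank ℂ E :=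
    le_trans (Cardinal.nat_lt_aleph0 k).le
      (not_lt.mp (fun h => hinf (Module.rank_lt_aleph0_iff.mp h)))
  obtain ⟨s, hs, hindep⟩ := le_rank_iff_exists_linearIndependent.mp hklerank
  exact ⟨_, Submodule.span ℂ s, by rw [rank_span_set hindep, hs], rfl⟩

lemma Kset_bddAbove (T : E →L[ℂ] E) (k : ℕ) (hk : 1 ≤ k) : BddAbove (Kset T k) := by
  refine ⟨‖T‖, ?_⟩
  rintro r ⟨V, hVr, rfl⟩
  have hVb : V ≠ ⊥ := by
    intro h
    rw [h, rank_bot] at hVr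
    have : k = 0 := by exact_mod_cast hVr.symm
    omega
  obtain ⟨v, hvV, hv1⟩ := exists_unit hVb
  calc sInf ((fun v => ‖T v‖) '' {v : E | v ∈ V ∧ ‖v‖ = 1}) ≤ ‖T v‖ :=
        csInf_le ⟨0, by rintro y ⟨u, -, rfl⟩; exact norm_nonneg _⟩ ⟨v, ⟨hvV, hv1⟩, rfl⟩
  _ ≤ ‖T‖ * ‖v‖ := T.le_opNorm v
  _ = ‖T‖ := by rw [hv1, mul_one]

lemma kolmogorov_le_gelfand (hinf : ¬ FiniteDimensional ℂ E) (k : ℕ) (hk : 1 ≤ k)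
    (T : E →L[ℂ] E) : kolmogorov T k ≤ gelfand T k := by
  rw [kolmogorov_def, gelfand_def]
  apply csSup_le (Kset_nonempty hinf k T)
  rintro r ⟨W, hWr, rfl⟩
  apply le_csInf (Gset_nonempty hinf k T)
  rintro r' ⟨V, hVc, hVr, rfl⟩
  have hexu : ∃ u : E, u ∈ W ∧ u ∈ V ∧ ‖u‖ = 1 := by
    set φ : ↥W →ₗ[ℂ] E ⧸ V := (V.mkQ).comp W.subtype with hφ
    have hni : ¬ Function.Injective φ := by
      intro hinj
      have h1 := LinearMap.rank_le_of_injective φ hinj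
      rw [hWr, hVr] at h1
      have : k ≤ k - 1 := by exact_mod_cast h1
      omega
    have hker : LinearMap.ker φ ≠ ⊥ := by
      rwa [ne_eq, LinearMap.ker_eq_bot]
    obtain ⟨w, hwker, hw0⟩ := (Submodule.ne_bot_iff _).mp hker
    have hφw : V.mkQ (w : E) = 0 := LinearMap.mem_ker.mp hwker
    have hwV : (w : E) ∈ V := by
      rwa [Submodule.mkQ_apply, Submodule.Quotient.mk_eq_zero] at hφw
    have hwB : (w : E) ≠ 0 := fun h => hw0 (Subtype.ext h)
    refine ⟨((‖(w : E)‖⁻¹ : ℝ) : ℂ) • (w : E), W.smul_mem _ w.2, V.smul_mem _ hwV, ?_⟩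
    rw [norm_smul, Complex.norm_real, Real.norm_eq_abs, abs_of_nonneg (by positivity),
      inv_mul_cancel₀ (norm_ne_zero_iff.mpr hwB)]
  obtain ⟨u, huW, huV, hu1⟩ := hexu
  calc sInf ((fun v => ‖T v‖) '' {v : E | v ∈ W ∧ ‖v‖ = 1}) ≤ ‖T u‖ :=
        csInf_le ⟨0, by rintro y ⟨x, -, rfl⟩; exact norm_nonneg _⟩ ⟨u, ⟨huW, hu1⟩, rfl⟩
  _ ≤ sSup ((fun v => ‖T v‖) '' {v : E | v ∈ V ∧ ‖v‖ = 1}) :=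
        le_csSup (bddAbove_image T V) ⟨u, ⟨huV, hu1⟩, rfl⟩

lemma coeff_bound (T : E →L[ℂ] E) {k : ℕ} (v : Fin k → E) (ψ : Fin k → (E →L[ℂ] ℂ))
    (hψ : ∀ i, ‖ψ i‖ = 1) (hdiag : ∀ i, (ψ i) (T (v i)) = ((‖T (v i)‖ : ℝ) : ℂ))
    (hzero : ∀ i l, i < l → (ψ i) (T (v l)) = 0) (a : Fin k → ℂ) (i : Fin k) :
    ‖a i‖ * ‖T (v i)‖ ≤ 2 ^ (i : ℕ) * ‖T (∑ l, a l • v l)‖ := by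
  set x : E := ∑ l, a l • v l with hx
  have h1 : ∀ m : Fin k, (ψ m) (T x) = ∑ l, a l * (ψ m) (T (v l)) := by
    intro m
    rw [hx, map_sum, map_sum]
    congr 1
    ext l
    rw [_root_.map_smul, _root_.map_smul, smul_eq_mul]
  suffices H : ∀ n : ℕ, ∀ i : Fin k, (i : ℕ) = n → ‖a i‖ * ‖T (v i)‖ ≤ 2 ^ n * ‖T x‖ by
    exact H (i : ℕ) i rfl
  intro n
  induction n using Nat.strong_induction_on with
  | _ n IH =>
    intro i hi
    have hik : n < k := hi ▸ i.isLt
    have hsplit : a i * (ψ i) (T (v i)) =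
        (ψ i) (T x) - ∑ l ∈ Finset.univ.erase i, a l * (ψ i) (T (v l)) := by
      rw [h1 i, ← Finset.add_sum_erase _ _ (Finset.mem_univ i)]
      ring
    have hnorm : ‖a i‖ * ‖T (v i)‖ = ‖a i * (ψ i) (T (v i))‖ := by
      rw [norm_mul, hdiag i, Complex.norm_real, Real.norm_eq_abs,
        abs_of_nonneg (norm_nonneg _)]
    have hbound : ∀ l ∈ Finset.univ.erase i, ‖a l * (ψ i) (T (v l))‖ ≤
        (if (l : ℕ) < n then (2 : ℝ) ^ (l : ℕ) * ‖T x‖ else 0) := by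
      intro l hl
      rcases lt_trichotomy l i with h | h | h
      · have hln : (l : ℕ) < n := by
          rw [← hi]; exact h
        rw [if_pos hln, norm_mul]
        calc ‖a l‖ * ‖(ψ i) (T (v l))‖ ≤ ‖a l‖ * ‖T (v l)‖ := by
              apply mul_le_mul_of_nonneg_left _ (norm_nonneg (a l))
              calc ‖(ψ i) (T (v l))‖ ≤ ‖ψ i‖ * ‖T (v l)‖ := (ψ i).le_opNorm _
              _ = ‖T (v l)‖ := by rw [hψ i, one_mul]
        _ ≤ 2 ^ (l : ℕ) * ‖T x‖ := IH (l : ℕ) hln l rfl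
      · exact absurd h (Finset.ne_of_mem_erase hl)
      · have : ¬ ((l : ℕ) < n) := by
          rw [← hi]
          exact not_lt.mpr (le_of_lt h)
        rw [if_neg this, hzero i l h, mul_zero, norm_zero]
    have hfilter : (Finset.range k).filter (fun j => j < n) = Finset.range n := by
      ext j
      simp only [Finset.mem_filter, Finset.mem_range]
      omega
    calc ‖a i‖ * ‖T (v i)‖ = ‖a i * (ψ i) (T (v i))‖ := hnorm
    _ ≤ ‖(ψ i) (T x)‖ + ‖∑ l ∈ Finset.univ.erase i, a l * (ψ i) (T (v l))‖ := by
        rw [hsplit]; exact norm_sub_le _ _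
    _ ≤ ‖T x‖ + ∑ l ∈ Finset.univ.erase i, ‖a l * (ψ i) (T (v l))‖ := by
        apply add_le_add
        · calc ‖(ψ i) (T x)‖ ≤ ‖ψ i‖ * ‖T x‖ := (ψ i).le_opNorm _
          _ = ‖T x‖ := by rw [hψ i, one_mul]
        · exact norm_sum_le _ _
    _ ≤ ‖T x‖ + ∑ l ∈ Finset.univ.erase i,
          (if (l : ℕ) < n then (2 : ℝ) ^ (l : ℕ) * ‖T x‖ else 0) :=
        add_le_add le_rfl (Finset.sum_le_sum hbound)
    _ ≤ ‖T x‖ + ∑ l : Fin k, (if (l : ℕ) < n then (2 : ℝ) ^ (l : ℕ) * ‖T x‖ else 0) := by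
        apply add_le_add le_rfl
        apply Finset.sum_le_sum_of_subset_of_nonneg (Finset.erase_subset _ _)
        intro l _ _
        split_ifs
        · positivity
        · exact le_refl 0
    _ = ‖T x‖ + (∑ j ∈ Finset.range n, (2 : ℝ) ^ j) * ‖T x‖ := by
        rw [Fin.sum_univ_eq_sum_range (fun j => if j < n then (2 : ℝ) ^ j * ‖T x‖ else 0) k]
        rw [← Finset.sum_filter, hfilter, Finset.sum_mul]
    _ = 2 ^ n * ‖T x‖ := by
        rw [geom_sum_eq (by norm_num : (2 : ℝ) ≠ 1) n]
        ring

lemma exists_chain (hinf : ¬ FiniteDimensional ℂ E) {k : ℕ} (hk : 1 ≤ k) (T : E →L[ℂ] E)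
    (hg : 0 < gelfand T k) :
    ∀ n, n ≤ k → ∃ (v : Fin n → E) (ψ : Fin n → (E →L[ℂ] ℂ)),
      (∀ i, ‖v i‖ = 1) ∧ (∀ i, ‖ψ i‖ = 1) ∧ (∀ i, gelfand T k / 2 < ‖T (v i)‖) ∧
      (∀ i, (ψ i) (T (v i)) = ((‖T (v i)‖ : ℝ) : ℂ)) ∧
      (∀ i l, i < l → (ψ i) (T (v l)) = 0) := by
  intro n
  induction n with
  | zero =>
      intro _
      exact ⟨Fin.elim0, Fin.elim0, fun i => i.elim0, fun i => i.elim0, fun i => i.elim0,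
        fun i => i.elim0, fun i => i.elim0⟩
  | succ n IH =>
      intro hn
      obtain ⟨v, ψ, h1, h2, h3, h4, h5⟩ := IH (Nat.le_of_succ_le hn)
      have hjn : n ≤ k - 1 := by omega
      obtain ⟨V, hVc, hVr, hVker⟩ :=
        exists_gelfand_subspace hinf (k - 1) hjn (fun i => (ψ i).comp T)
      have hmem : sSup ((fun v => ‖T v‖) '' {v : E | v ∈ V ∧ ‖v‖ = 1}) ∈ Gset T k :=
        ⟨V, hVc, hVr, rfl⟩
      have hgle : gelfand T k ≤ sSup ((fun v => ‖T v‖) '' {v : E | v ∈ V ∧ ‖v‖ = 1}) :=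
        csInf_le (Gset_bddBelow hinf T k) hmem
      have hVb : V ≠ ⊥ :=
        not_bot_of_quot_finite hinf (by rw [hVr]; exact Cardinal.nat_lt_aleph0 _)
      obtain ⟨u, huV, hu1⟩ := exists_unit hVb
      have himne : ((fun v => ‖T v‖) '' {v : E | v ∈ V ∧ ‖v‖ = 1}).Nonempty :=
        ⟨‖T u‖, u, ⟨huV, hu1⟩, rfl⟩
      have hhalf : gelfand T k / 2 < sSup ((fun v => ‖T v‖) '' {v : E | v ∈ V ∧ ‖v‖ = 1}) :=
        lt_of_lt_of_le (by linarith) hgle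
      obtain ⟨y, hy, hylt⟩ := exists_lt_of_lt_csSup himne hhalf
      obtain ⟨v', ⟨hv'V, hv'1⟩, rfl⟩ := hy
      have hylt' : gelfand T k / 2 < ‖T v'‖ := by simpa using hylt
      have hTv' : T v' ≠ 0 := by
        intro h
        rw [h, norm_zero] at hylt'
        linarith
      obtain ⟨ψ', hψ'1, hψ'v⟩ := exists_dual_vector ℂ (T v') (norm_ne_zero_iff.mpr hTv')
      refine ⟨Fin.snoc v v', Fin.snoc ψ ψ', ?_, ?_, ?_, ?_, ?_⟩
      · intro i
        refine Fin.lastCases ?_ ?_ i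
        · rw [Fin.snoc_last]; exact hv'1
        · intro j; rw [Fin.snoc_castSucc]; exact h1 j
      · intro i
        refine Fin.lastCases ?_ ?_ i
        · rw [Fin.snoc_last]; exact hψ'1
        · intro j; rw [Fin.snoc_castSucc]; exact h2 j
      · intro i
        refine Fin.lastCases ?_ ?_ i
        · rw [Fin.snoc_last]; exact hylt'
        · intro j; rw [Fin.snoc_castSucc]; exact h3 j
      · intro i
        refine Fin.lastCases ?_ ?_ i
        · rw [Fin.snoc_last, Fin.snoc_last]; exact hψ'v
        · intro j; rw [Fin.snoc_castSucc, Fin.snoc_castSucc]; exact h4 j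
      · intro i l hil
        rcases Fin.eq_castSucc_or_eq_last l with ⟨l', rfl⟩ | rfl
        · rcases Fin.eq_castSucc_or_eq_last i with ⟨i', rfl⟩ | rfl
          · rw [Fin.snoc_castSucc, Fin.snoc_castSucc]
            exact h5 i' l' (by simpa using hil)
          · exact absurd hil (not_lt.mpr (Fin.castSucc_lt_last l').le)
        · rcases Fin.eq_castSucc_or_eq_last i with ⟨i', rfl⟩ | rfl
          · rw [Fin.snoc_castSucc, Fin.snoc_last]
            have hker := hVker i' hv'V
            simpa using LinearMap.mem_ker.mp hker
          · exact absurd hil (lt_irrefl _)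

end GKaux

end GKauxSection

/-- **Comparison of Gelfand and Kolmogorov numbers** (first part of Lemma 1 of the paper):
for every `k ≥ 1` there exists a constant `C > 0` depending only on `k` such that
`(1/C)·F_k(T) ≤ c_k(T) ≤ C·F_k(T)` for every bounded operator `T`. -/

theorem gelfand_kolmogorov_comparison
    (hinf : ¬ FiniteDimensional ℂ B) (k : ℕ) (hk : 1 ≤ k) :
    ∃ C : ℝ, 0 < C ∧ ∀ T : B →L[ℂ] B,
      (1 / C) * kolmogorov T k ≤ gelfand T k ∧ gelfand T k ≤ C * kolmogorov T k := by
  refine ⟨2 ^ (k + 1), by positivity, fun T => ?_⟩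
  have hFle : kolmogorov T k ≤ gelfand T k := GKaux.kolmogorov_le_gelfand hinf k hk T
  have hF0 : 0 ≤ kolmogorov T k := by
    rw [GKaux.kolmogorov_def]
    exact Real.sSup_nonneg (GKaux.Kset_nonneg T k)
  have hC1 : (1 : ℝ) ≤ 2 ^ (k + 1) := by
    calc (1 : ℝ) = 1 ^ (k + 1) := (one_pow _).symm
    _ ≤ 2 ^ (k + 1) := pow_le_pow_left₀ zero_le_one one_le_two _
  constructor
  · have h' : (1 : ℝ) / 2 ^ (k + 1) ≤ 1 := by
      rw [div_le_one (by positivity)]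
      exact hC1
    have h'' := mul_le_mul_of_nonneg_right h' hF0
    rw [one_mul] at h''
    linarith
  · by_cases hg : 0 < gelfand T k
    · obtain ⟨v, ψ, h1, h2, h3, h4, h5⟩ := GKaux.exists_chain hinf hk T hg k le_rfl
      set g := gelfand T k with hgdef
      have hTvpos : ∀ i, 0 < ‖T (v i)‖ := fun i => lt_trans (by positivity) (h3 i)
      have hvind : LinearIndependent ℂ v := by
        rw [Fintype.linearIndependent_iff]
        intro a ha i
        have hb := GKaux.coeff_bound T v ψ h2 h4 h5 a i
        rw [ha, map_zero, norm_zero, mul_zero] at hb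
        have hai : ‖a i‖ ≤ 0 := by
          by_contra hcon
          push_neg at hcon
          nlinarith [hTvpos i]
        exact norm_eq_zero.mp (le_antisymm hai (norm_nonneg _))
      set W : Submodule ℂ B := Submodule.span ℂ (Set.range v) with hW
      have hWrank : Module.rank ℂ W = (k : Cardinal) := by
        rw [hW, rank_span hvind]
        have hmk := Cardinal.mk_range_eq_of_injective hvind.injective
        rw [Cardinal.mk_fin, Cardinal.lift_natCast, Cardinal.lift_uzero] at hmk
        exact hmk
      have hlow : ∀ x : B, x ∈ W → ‖x‖ = 1 → g / 2 ^ (k + 1) ≤ ‖T x‖ := by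
        intro x hxW hx1
        obtain ⟨a, ha⟩ := (Submodule.mem_span_range_iff_exists_fun ℂ).mp hxW
        have hxa : x = ∑ l, a l • v l := ha.symm
        have hsum : ∑ i, ‖a i‖ * (g / 2) ≤ ∑ i : Fin k, (2 : ℝ) ^ (i : ℕ) * ‖T x‖ := by
          apply Finset.sum_le_sum
          intro i _
          calc ‖a i‖ * (g / 2) ≤ ‖a i‖ * ‖T (v i)‖ :=
                mul_le_mul_of_nonneg_left (h3 i).le (norm_nonneg _)
          _ ≤ 2 ^ (i : ℕ) * ‖T (∑ l, a l • v l)‖ := GKaux.coeff_bound T v ψ h2 h4 h5 a i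
          _ = 2 ^ (i : ℕ) * ‖T x‖ := by rw [← hxa]
        have hxle : ‖x‖ ≤ ∑ i, ‖a i‖ := by
          rw [hxa]
          calc ‖∑ l, a l • v l‖ ≤ ∑ l, ‖a l • v l‖ := norm_sum_le _ _
          _ = ∑ l, ‖a l‖ := by
              apply Finset.sum_congr rfl
              intro l _
              rw [norm_smul, h1 l, mul_one]
        have hgeo : ∑ i : Fin k, (2 : ℝ) ^ (i : ℕ) ≤ 2 ^ k := by
          rw [Fin.sum_univ_eq_sum_range (fun j => (2 : ℝ) ^ j) k,
            geom_sum_eq (by norm_num : (2 : ℝ) ≠ 1) k]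
          norm_num
        have hTx0 : (0 : ℝ) ≤ ‖T x‖ := norm_nonneg _
        have h2' : (∑ i, ‖a i‖) * (g / 2) ≤ 2 ^ k * ‖T x‖ := by
          calc (∑ i, ‖a i‖) * (g / 2) = ∑ i, ‖a i‖ * (g / 2) := by rw [Finset.sum_mul]
          _ ≤ ∑ i : Fin k, (2 : ℝ) ^ (i : ℕ) * ‖T x‖ := hsum
          _ = (∑ i : Fin k, (2 : ℝ) ^ (i : ℕ)) * ‖T x‖ := by rw [Finset.sum_mul]
          _ ≤ 2 ^ k * ‖T x‖ := mul_le_mul_of_nonneg_right hgeo hTx0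
        have hx2 : g / 2 ≤ 2 ^ k * ‖T x‖ := by
          have hone : 1 * (g / 2) ≤ (∑ i, ‖a i‖) * (g / 2) := by
            apply mul_le_mul_of_nonneg_right _ (by positivity)
            rw [← hx1]; exact hxle
          linarith
        rw [div_le_iff₀ (by positivity)]
        calc g = 2 * (g / 2) := by ring
        _ ≤ 2 * (2 ^ k * ‖T x‖) := by linarith
        _ = ‖T x‖ * 2 ^ (k + 1) := by ring
      have h0k : 0 < k := hk
      have hWne : ((fun y => ‖T y‖) '' {x : B | x ∈ W ∧ ‖x‖ = 1}).Nonempty :=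
        ⟨‖T (v ⟨0, h0k⟩)‖, v ⟨0, h0k⟩,
          ⟨Submodule.subset_span (Set.mem_range_self _), h1 _⟩, rfl⟩
      have hrK : sInf ((fun y => ‖T y‖) '' {x : B | x ∈ W ∧ ‖x‖ = 1}) ∈ GKaux.Kset T k :=
        ⟨W, hWrank, rfl⟩
      have hrlow : g / 2 ^ (k + 1) ≤
          sInf ((fun y => ‖T y‖) '' {x : B | x ∈ W ∧ ‖x‖ = 1}) := by
        apply le_csInf hWne
        rintro y ⟨x, ⟨hxW, hx1⟩, rfl⟩
        exact hlow x hxW hx1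
      have hrF : sInf ((fun y => ‖T y‖) '' {x : B | x ∈ W ∧ ‖x‖ = 1}) ≤ kolmogorov T k := by
        rw [GKaux.kolmogorov_def]
        exact le_csSup (GKaux.Kset_bddAbove T k hk) hrK
      have hfin : g / 2 ^ (k + 1) ≤ kolmogorov T k := le_trans hrlow hrF
      calc gelfand T k = 2 ^ (k + 1) * (g / 2 ^ (k + 1)) := by field_simp; rfl
      _ ≤ 2 ^ (k + 1) * kolmogorov T k :=
          mul_le_mul_of_nonneg_left hfin (by positivity)
    · push_neg at hg
      calc gelfand T k ≤ 0 := hg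
      _ ≤ 2 ^ (k + 1) * kolmogorov T k := mul_nonneg (by positivity) hF0
end
end

section
/- Let 𝓑 be an infinite-dimensional complex Banach space. For every compact operator T ∈ B₀(𝓑), every integer s ≥ 1, and every integer n ≥ 1, one has ρ_s(T^n) = ρ_s(T)^n, where ρ_s(T) := lim_{m→∞} φ_c^s(T^m)^{1/m}. -/
open Filter Topology MeasureTheory

noncomputable section

variable {B : Type*} [NormedAddCommGroup B] [NormedSpace ℂ B] [CompleteSpace B]

private lemma key_limsup (f : ℕ → ℝ) (n : ℕ) (hn : 1 ≤ n) (Bd : ℝ) (hBd : 0 ≤ Bd)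
    (h0 : ∀ m, 0 ≤ f m) (hB : ∀ m, f m ≤ Bd ^ m)
    (C : ℝ) (hC : 1 ≤ C) (hsub : ∀ r ≤ n, ∀ b, f (r + b) ≤ C * f b) :
    limsup (fun m : ℕ => f (n*m) ^ (1/(m:ℝ) : ℝ)) atTop
      = (limsup (fun m : ℕ => f m ^ (1/(m:ℝ) : ℝ)) atTop) ^ n := by
  set g : ℕ → ℝ := fun m => f m ^ (1/(m:ℝ) : ℝ) with hg
  have hg0 : ∀ m, 0 ≤ g m := fun m => Real.rpow_nonneg (h0 m) _
  have hgB : ∀ m, g m ≤ max 1 Bd := by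
    intro m
    rcases Nat.eq_zero_or_pos m with hm | hm
    · subst hm; simp [hg]
    · have : g m ≤ (Bd ^ m) ^ (1/(m:ℝ) : ℝ) :=
        Real.rpow_le_rpow (h0 m) (hB m) (by positivity)
      refine this.trans ?_
      rw [← Real.rpow_natCast Bd m, ← Real.rpow_mul hBd]
      rw [mul_one_div, div_self (by exact_mod_cast hm.ne')]
      simpa using le_max_right 1 Bd
  have hbdd : IsBoundedUnder (· ≤ ·) atTop g := isBoundedUnder_of ⟨max 1 Bd, hgB⟩
  have hcob : IsCoboundedUnder (· ≤ ·) atTop g :=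
    isCoboundedUnder_le_of_eventually_le atTop (Eventually.of_forall hg0)
  have htendn : Tendsto (fun m : ℕ => n * m) atTop atTop :=
    tendsto_atTop_mono (fun m => Nat.le_mul_of_pos_left m (by omega)) tendsto_id
  have hgn : ∀ m : ℕ, f (n*m) ^ (1/(m:ℝ) : ℝ) = g (n*m) ^ n := by
    intro m
    rcases Nat.eq_zero_or_pos m with hm | hm
    · subst hm; simp [hg]
    · rw [hg]
      rw [← Real.rpow_natCast (f (n*m) ^ (1/((n*m : ℕ):ℝ) : ℝ)) n,
        ← Real.rpow_mul (h0 _)]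
      congr 1
      have hn0 : ((n:ℝ)) ≠ 0 := by exact_mod_cast (by omega : n ≠ 0)
      have hm0 : ((m:ℝ)) ≠ 0 := by exact_mod_cast hm.ne'
      push_cast
      field_simp
  have hbdd2 : IsBoundedUnder (· ≤ ·) atTop (fun m => g (n*m) ^ n) :=
    isBoundedUnder_of ⟨(max 1 Bd) ^ n, fun m =>
      pow_le_pow_left₀ (hg0 _) (hgB _) n⟩
  have hcob2 : IsCoboundedUnder (· ≤ ·) atTop (fun m => g (n*m) ^ n) :=
    isCoboundedUnder_le_of_eventually_le atTop
      (Eventually.of_forall fun m => pow_nonneg (hg0 _) n)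
  set L := limsup g atTop with hL
  set R := limsup (fun m => g (n*m) ^ n) atTop with hR
  have hmain : (fun m : ℕ => f (n*m) ^ (1/(m:ℝ) : ℝ)) = fun m => g (n*m) ^ n :=
    funext hgn
  rw [hmain]
  have hL0 : 0 ≤ L :=
    le_limsup_of_frequently_le (Frequently.of_forall hg0) hbdd
  have hR0 : 0 ≤ R :=
    le_limsup_of_frequently_le (Frequently.of_forall fun m => pow_nonneg (hg0 _) n) hbdd2
  have stepA : R ≤ L ^ n := by
    have hA : ∀ ε > (0:ℝ), R ≤ (L + ε) ^ n := by
      intro ε hε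
      have h1 : ∀ᶠ m in atTop, g m < L + ε :=
        eventually_lt_of_limsup_lt (by linarith) hbdd
      have h2 : ∀ᶠ m in atTop, g (n*m) < L + ε := htendn.eventually h1
      exact limsup_le_of_le hcob2 (h2.mono fun m hm => pow_le_pow_left₀ (hg0 _) hm.le n)
    have htend : Tendsto (fun ε : ℝ => (L + ε) ^ n) (nhdsWithin 0 (Set.Ioi 0)) (nhds (L ^ n)) := by
      have : Tendsto (fun ε : ℝ => (L + ε) ^ n) (nhds 0) (nhds ((L + 0) ^ n)) :=
        (Continuous.tendsto (by continuity) 0)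
      simpa using this.mono_left nhdsWithin_le_nhds
    exact ge_of_tendsto htend (eventually_nhdsWithin_of_forall fun ε hε => hA ε hε)
  have stepB : L ^ n ≤ R := by
    have hB' : ∀ ε > (0:ℝ), L ^ n ≤ R + ε := by
      intro ε hε
      set ρ : ℝ := (R + ε) ^ (1/(n:ℝ) : ℝ) with hρ
      have hRε : (0:ℝ) < R + ε := by linarith
      have hρpos : 0 < ρ := Real.rpow_pos_of_pos hRε _
      have hρn : ρ ^ n = R + ε := by
        rw [hρ, ← Real.rpow_natCast ((R+ε) ^ (1/(n:ℝ) : ℝ)) n, ← Real.rpow_mul hRε.le]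
        rw [one_div, inv_mul_cancel₀ (by exact_mod_cast (by omega : n ≠ 0))]
        exact Real.rpow_one _
      have h1 : ∀ᶠ m in atTop, g (n*m) ^ n < R + ε :=
        eventually_lt_of_limsup_lt (by linarith) hbdd2
      have h2 : ∀ᶠ m in atTop, g (n*m) ≤ ρ := h1.mono fun m hm =>
        le_of_pow_le_pow_left₀ (n := n) (by omega) hρpos.le (by rw [hρn]; exact hm.le)
      obtain ⟨m0, hm0⟩ := eventually_atTop.mp h2
      have h3 : ∀ q, m0 + 1 ≤ q → f (n*q) ≤ ρ ^ (n*q) := by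
        intro q hq
        have hqpos : 0 < q := by omega
        have hnq : (((n*q : ℕ)):ℝ) ≠ 0 := by
          have : 0 < n*q := by positivity
          exact_mod_cast this.ne'
        have hgq := hm0 q (by omega)
        have : f (n*q) = (g (n*q)) ^ (n*q) := by
          rw [hg, ← Real.rpow_natCast (f (n*q) ^ (1/(((n*q:ℕ)):ℝ) : ℝ)) (n*q),
            ← Real.rpow_mul (h0 _), one_div, inv_mul_cancel₀ hnq, Real.rpow_one]
        rw [this]
        exact pow_le_pow_left₀ (hg0 _) (hm0 q (by omega)) _
      -- now bound f m for all large m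
      set D : ℝ := C * max 1 ρ⁻¹ ^ n with hD
      have hmax1 : (1:ℝ) ≤ max 1 ρ⁻¹ := le_max_left _ _
      have hD1 : (1:ℝ) ≤ D := one_le_mul_of_one_le_of_one_le hC (one_le_pow₀ hmax1)
      have hDpos : (0:ℝ) < D := by linarith
      have h4 : ∀ m, n*(m0+1) ≤ m → f m ≤ D * ρ ^ m := by
        intro m hm
        set q := m / n with hqdef
        set r := m % n with hrdef
        have hmq : m = r + n*q := by rw [hrdef, hqdef, Nat.mod_add_div]
        have hq : m0 + 1 ≤ q := (Nat.le_div_iff_mul_le (by omega)).mpr (by rwa [mul_comm])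
        have hrn : r < n := Nat.mod_lt _ (by omega)
        have c1 : f m ≤ C * f (n*q) := by
          calc f m = f (r + n*q) := by rw [← hmq]
          _ ≤ C * f (n*q) := hsub r hrn.le _
        have c2 : C * f (n*q) ≤ C * ρ ^ (n*q) :=
          mul_le_mul_of_nonneg_left (h3 q hq) (by linarith)
        refine c1.trans (c2.trans ?_)
        -- ρ^(n*q) ≤ max 1 ρ⁻¹ ^ n * ρ ^ m
        have hsplit : ρ ^ m = ρ ^ (n*q) * ρ ^ r := by
          rw [hmq]; ring
        have hinv : ρ ^ (n*q) = ρ ^ m * (ρ⁻¹) ^ r := by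
          rw [hsplit, inv_pow]
          field_simp
        have hbound : (ρ⁻¹) ^ r ≤ max 1 ρ⁻¹ ^ n :=
          (pow_le_pow_left₀ (by positivity) (le_max_right 1 ρ⁻¹) r).trans
            (pow_le_pow_right₀ hmax1 hrn.le)
        calc C * ρ ^ (n*q) = C * (ρ ^ m * (ρ⁻¹) ^ r) := by rw [hinv]
        _ ≤ C * (ρ ^ m * max 1 ρ⁻¹ ^ n) := by
            have : ρ ^ m * (ρ⁻¹) ^ r ≤ ρ ^ m * max 1 ρ⁻¹ ^ n :=
              mul_le_mul_of_nonneg_left hbound (by positivity)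
            exact mul_le_mul_of_nonneg_left this (by linarith)
        _ = D * ρ ^ m := by rw [hD]; ring
      -- conclude L ≤ ρ
      have h5 : ∀ᶠ m in atTop, g m ≤ D ^ (1/(m:ℝ) : ℝ) * ρ := by
        filter_upwards [eventually_ge_atTop (max 1 (n*(m0+1)))] with m hm
        have hm1 : 1 ≤ m := le_of_max_le_left hm
        have hm2 : n*(m0+1) ≤ m := le_of_max_le_right hm
        have hmne : ((m:ℝ)) ≠ 0 := by exact_mod_cast (by omega : m ≠ 0)
        have e1 : g m ≤ (D * ρ ^ m) ^ (1/(m:ℝ) : ℝ) :=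
          Real.rpow_le_rpow (h0 m) (h4 m hm2) (by positivity)
        refine e1.trans_eq ?_
        rw [Real.mul_rpow hDpos.le (by positivity), ← Real.rpow_natCast ρ m,
          ← Real.rpow_mul hρpos.le, mul_one_div, div_self hmne, Real.rpow_one]
      have h6 : Tendsto (fun m : ℕ => D ^ (1/(m:ℝ) : ℝ) * ρ) atTop (nhds (1 * ρ)) := by
        have hD0 : Tendsto (fun m : ℕ => D ^ (1/(m:ℝ) : ℝ)) atTop (nhds (D ^ (0:ℝ))) :=
          ((Real.continuousAt_const_rpow hDpos.ne').tendsto).comp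
            tendsto_one_div_atTop_nhds_zero_nat
        simpa [Real.rpow_zero] using hD0.mul_const ρ
      have hLρ : L ≤ ρ := by
        have := limsup_le_limsup h5 hcob (h6.isBoundedUnder_le)
        rwa [h6.limsup_eq, one_mul] at this
      calc L ^ n ≤ ρ ^ n := pow_le_pow_left₀ hL0 hLρ n
      _ = R + ε := hρn
    refine le_of_forall_pos_le_add hB'
  exact le_antisymm stepA stepB


lemma exists_closed_codim (hinf : ¬ FiniteDimensional ℂ B) (d : ℕ) :
    ∃ V : Submodule ℂ B, IsClosed (V : Set B) ∧ Module.rank ℂ (B ⧸ V) = (d : Cardinal) := by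
  induction d with
  | zero =>
    refine ⟨⊤, by rw [Submodule.top_coe]; exact isClosed_univ, ?_⟩
    have : Subsingleton (B ⧸ (⊤ : Submodule ℂ B)) :=
      Submodule.Quotient.subsingleton_iff.mpr rfl
    simp [rank_subsingleton']
  | succ d ih =>
    obtain ⟨V, hVc, hVr⟩ := ih
    have hVne : ∃ v : B, v ∈ V ∧ v ≠ 0 := by
      by_contra h
      push_neg at h
      have hbot : V = ⊥ := by
        ext x; simp only [Submodule.mem_bot]
        exact ⟨fun hx => by by_contra hne; exact hne (h x hx), fun hx => hx ▸ V.zero_mem⟩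
      subst hbot
      have : Module.rank ℂ B = (d : Cardinal) := by
        have e : (B ⧸ (⊥ : Submodule ℂ B)) ≃ₗ[ℂ] B := Submodule.quotEquivOfEqBot _ rfl
        rw [← e.rank_eq, hVr]
      exact hinf (Module.finite_of_rank_eq_nat this)
    obtain ⟨v, hvV, hv0⟩ := hVne
    obtain ⟨g, hg1, hgv⟩ := exists_dual_vector ℂ v (norm_ne_zero_iff.mpr hv0)
    have hgv0 : g v ≠ 0 := by
      rw [hgv]
      simpa [Complex.ofReal_eq_zero] using hv0
    set V' : Submodule ℂ B := V ⊓ LinearMap.ker (g : B →ₗ[ℂ] ℂ) with hV'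
    have hV'c : IsClosed (V' : Set B) := hVc.inter (ContinuousLinearMap.isClosed_ker g)
    have hvV' : v ∉ V' := fun h => hgv0 (LinearMap.mem_ker.mp h.2)
    have hsup : V = V' ⊔ Submodule.span ℂ {v} := by
      apply le_antisymm
      · intro w hw
        refine Submodule.mem_sup.mpr ⟨w - (g w / g v) • v,
          ⟨V.sub_mem hw (V.smul_mem _ hvV), LinearMap.mem_ker.mpr ?_⟩,
          (g w / g v) • v,
          Submodule.smul_mem _ _ (Submodule.mem_span_singleton_self v), by abel⟩
        simp [div_mul_cancel₀, hgv0]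
      · exact sup_le inf_le_left ((Submodule.span_singleton_le_iff_mem _ _).mpr hvV)
    have hmkv : V'.mkQ v ≠ 0 := by
      simpa [Submodule.mkQ_apply, Submodule.Quotient.mk_eq_zero] using hvV'
    have hmap : Submodule.map V'.mkQ V = Submodule.span ℂ {V'.mkQ v} := by
      rw [hsup, Submodule.map_sup, Submodule.map_span]
      have h1 : Submodule.map V'.mkQ V' = ⊥ := by
        rw [eq_bot_iff]
        rintro x ⟨y, hy, rfl⟩
        simpa [Submodule.mkQ_apply, Submodule.Quotient.mk_eq_zero] using hy
      rw [h1, bot_sup_eq, Set.image_singleton]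
    have hrank1 : Module.rank ℂ (Submodule.map V'.mkQ V) = 1 := by
      rw [hmap]
      rw [rank_span_set ((linearIndepOn_singleton_iff ℂ).mpr hmkv)]
      simp
    refine ⟨V', hV'c, ?_⟩
    have heq := Submodule.rank_quotient_add_rank (Submodule.map V'.mkQ V)
    have e2 := Submodule.quotientQuotientEquivQuotient V' V inf_le_left
    rw [e2.rank_eq, hVr, hrank1] at heq
    rw [← heq]
    push_cast
    ring


namespace GelfandAux


def gset (T : B →L[ℂ] B) (k : ℕ) : Set ℝ :=
  { r : ℝ | ∃ V : Submodule ℂ B, IsClosed (V : Set B) ∧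
    Module.rank ℂ (B ⧸ V) = ((k - 1 : ℕ) : Cardinal) ∧
    r = sSup ((fun v => ‖T v‖) '' {v : B | v ∈ V ∧ ‖v‖ = 1}) }

lemma gelfand_eq (T : B →L[ℂ] B) (k : ℕ) : gelfand T k = sInf (gset T k) := rfl

lemma gset_nonneg {T : B →L[ℂ] B} {k : ℕ} {r : ℝ} (hr : r ∈ gset T k) : 0 ≤ r := by
  obtain ⟨V, -, -, rfl⟩ := hr
  exact Real.sSup_nonneg fun x hx => by
    obtain ⟨v, -, rfl⟩ := hx; exact norm_nonneg _

lemma gset_bddBelow (T : B →L[ℂ] B) (k : ℕ) : BddBelow (gset T k) :=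
  ⟨0, fun r hr => gset_nonneg hr⟩

lemma gset_nonempty (hinf : ¬ FiniteDimensional ℂ B) (T : B →L[ℂ] B) (k : ℕ) :
    (gset T k).Nonempty := by
  obtain ⟨V, hc, hr⟩ := exists_closed_codim hinf (k - 1)
  exact ⟨_, V, hc, hr, rfl⟩

lemma gelfand_nonneg (T : B →L[ℂ] B) (k : ℕ) : 0 ≤ gelfand T k :=
  Real.sInf_nonneg fun r hr => gset_nonneg hr

lemma sphere_sSup_le {T : B →L[ℂ] B} {V : Submodule ℂ B} :
    sSup ((fun v => ‖T v‖) '' {v : B | v ∈ V ∧ ‖v‖ = 1}) ≤ ‖T‖ := by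
  refine Real.sSup_le ?_ (norm_nonneg T)
  rintro x ⟨v, ⟨-, hv1⟩, rfl⟩
  calc ‖T v‖ ≤ ‖T‖ * ‖v‖ := T.le_opNorm v
  _ = ‖T‖ := by rw [hv1, mul_one]

lemma gelfand_le_norm (hinf : ¬ FiniteDimensional ℂ B) (T : B →L[ℂ] B) (k : ℕ) :
    gelfand T k ≤ ‖T‖ := by
  obtain ⟨V, hc, hr⟩ := exists_closed_codim hinf (k - 1)
  exact le_trans (csInf_le (gset_bddBelow T k) ⟨V, hc, hr, rfl⟩) sphere_sSup_le

lemma gelfand_mul_le (hinf : ¬ FiniteDimensional ℂ B) (S T : B →L[ℂ] B) (k : ℕ) :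
    gelfand (S * T) k ≤ ‖S‖ * gelfand T k := by
  have key : ∀ r ∈ gset T k, gelfand (S * T) k ≤ ‖S‖ * r := by
    rintro r ⟨V, hc, hr, rfl⟩
    refine le_trans (csInf_le (gset_bddBelow (S*T) k) ⟨V, hc, hr, rfl⟩) ?_
    refine Real.sSup_le ?_ ?_
    · rintro x ⟨v, ⟨hv, hv1⟩, rfl⟩
      have h1 : ‖(S * T) v‖ ≤ ‖S‖ * ‖T v‖ := by
        rw [ContinuousLinearMap.mul_apply]; exact S.le_opNorm _
      refine h1.trans (mul_le_mul_of_nonneg_left ?_ (norm_nonneg S))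
      refine le_csSup ⟨‖T‖, ?_⟩ ⟨v, ⟨hv, hv1⟩, rfl⟩
      rintro x ⟨w, ⟨-, hw1⟩, rfl⟩
      calc ‖T w‖ ≤ ‖T‖ * ‖w‖ := T.le_opNorm w
      _ = ‖T‖ := by rw [hw1, mul_one]
    · exact mul_nonneg (norm_nonneg S)
        (Real.sSup_nonneg fun x hx => by obtain ⟨v, -, rfl⟩ := hx; exact norm_nonneg _)
  rcases eq_or_lt_of_le (norm_nonneg S) with hS | hS
  · obtain ⟨r, hr⟩ := gset_nonempty hinf T k
    have := key r hr
    rw [← hS] at this ⊢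
    simpa using this
  · rw [gelfand_eq T k, mul_comm, ← div_le_iff₀ hS]
    refine le_csInf (gset_nonempty hinf T k) fun r hr => ?_
    rw [div_le_iff₀ hS, mul_comm]
    exact key r hr

lemma phiC_natCast (T : B →L[ℂ] B) (s : ℕ) :
    phiC T (s : ℝ) = ∏ j ∈ Finset.Icc 1 s, gelfand T j := by
  unfold phiC
  rw [Nat.floor_natCast, sub_self, Real.rpow_zero, mul_one]

end GelfandAux


open GelfandAux in
/-- **Power rule for the `s`-spectral radius of compact operators** (Lemma of the paper,
equivalent to `ξ_j(Tⁿ) = n·ξ_j(T)`): for every compact operator `T`, every integer `s ≥ 1`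
and every integer `n ≥ 1`, `ρ_s(Tⁿ) = ρ_s(T)ⁿ`. -/
theorem rhoS_pow (hinf : ¬ FiniteDimensional ℂ B)
    (T : B →L[ℂ] B) (hT : IsCompactOperator T)
    (s : ℕ) (hs : 1 ≤ s) (n : ℕ) (hn : 1 ≤ n) :
    rhoS (T ^ n) (s : ℝ) = rhoS T (s : ℝ) ^ n := by
  classical
  set f : ℕ → ℝ := fun m => phiC (T ^ m) (s : ℝ) with hf
  have hfp : ∀ m, f m = ∏ j ∈ Finset.Icc 1 s, gelfand (T ^ m) j := fun m =>
    phiC_natCast _ s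
  have hTm : ∀ m : ℕ, ‖T ^ m‖ ≤ (max 1 ‖T‖) ^ m := by
    intro m; induction m with
    | zero =>
      simpa [pow_zero, ContinuousLinearMap.one_def] using ContinuousLinearMap.norm_id_le
    | succ m ih =>
      rw [pow_succ, pow_succ]
      calc ‖T ^ m * T‖ ≤ ‖T ^ m‖ * ‖T‖ := norm_mul_le _ _
      _ ≤ (max 1 ‖T‖) ^ m * max 1 ‖T‖ :=
        mul_le_mul ih (le_max_right _ _) (norm_nonneg _) (by positivity)
  have hcard : (Finset.Icc 1 s).card = s := by rw [Nat.card_Icc]; omega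
  have h0 : ∀ m, 0 ≤ f m := fun m => by
    rw [hfp]; exact Finset.prod_nonneg fun j _ => gelfand_nonneg _ j
  have hB : ∀ m, f m ≤ ((max 1 ‖T‖) ^ s) ^ m := by
    intro m
    rw [hfp]
    have h1 : ∏ j ∈ Finset.Icc 1 s, gelfand (T ^ m) j ≤ ∏ _j ∈ Finset.Icc 1 s, ‖T ^ m‖ :=
      Finset.prod_le_prod (fun j _ => gelfand_nonneg _ j)
        (fun j _ => gelfand_le_norm hinf _ j)
    rw [Finset.prod_const, hcard] at h1
    refine h1.trans ?_
    calc ‖T ^ m‖ ^ s ≤ ((max 1 ‖T‖) ^ m) ^ s :=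
      pow_le_pow_left₀ (norm_nonneg _) (hTm m) s
    _ = ((max 1 ‖T‖) ^ s) ^ m := by rw [← pow_mul, ← pow_mul, mul_comm]
  have hsub : ∀ r ≤ n, ∀ b, f (r + b) ≤ (max 1 ‖T‖) ^ (n * s) * f b := by
    intro r hr b
    rw [hfp, hfp]
    have h1 : ∀ j ∈ Finset.Icc 1 s,
        gelfand (T ^ (r + b)) j ≤ ‖T ^ r‖ * gelfand (T ^ b) j := by
      intro j _
      rw [pow_add]
      exact gelfand_mul_le hinf _ _ j
    have h2 := Finset.prod_le_prod (f := fun j => gelfand (T ^ (r + b)) j)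
      (fun j _ => gelfand_nonneg _ j) h1
    rw [Finset.prod_mul_distrib, Finset.prod_const, hcard] at h2
    refine h2.trans (mul_le_mul_of_nonneg_right ?_
      (Finset.prod_nonneg fun j _ => gelfand_nonneg _ j))
    calc ‖T ^ r‖ ^ s ≤ ((max 1 ‖T‖) ^ r) ^ s := pow_le_pow_left₀ (norm_nonneg _) (hTm r) s
    _ = (max 1 ‖T‖) ^ (r * s) := by rw [← pow_mul]
    _ ≤ (max 1 ‖T‖) ^ (n * s) :=
      pow_le_pow_right₀ (le_max_left _ _) (Nat.mul_le_mul_right s hr)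
  have hC1 : (1:ℝ) ≤ (max 1 ‖T‖) ^ (n * s) := one_le_pow₀ (le_max_left _ _)
  have key := key_limsup f n hn ((max 1 ‖T‖) ^ s) (by positivity) h0 hB _ hC1 hsub
  have lhs : rhoS (T ^ n) (s : ℝ) =
      Filter.limsup (fun m : ℕ => f (n * m) ^ (1/(m:ℝ) : ℝ)) Filter.atTop := by
    unfold rhoS
    congr 1
    funext m
    rw [hf]
    simp only []
    rw [← pow_mul]
  rw [lhs, key]
  rfl
end
end
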